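/- arXiv:2110.12603 — 2 statements merged into one kernel-verified Lean document; each statement's English description precedes it below -/
import Mathlib

section
/- Let Ω be a finite probability space, H a finite set with distribution P(·) on H, and let Q^S : H × Γ → ℝ (supervisor's Q) and Q : Γ → ℝ (coordinator's Q) satisfy Q(γ) = ∑_{h∈H} P(h) Q^S(h, γ) for all γ in a finite set Γ. Fix h₁, h₂ ∈ H with P(h₁), P(h₂) > 0, fix γ* ∈ argmax_γ Q(γ), and let υ₁ = Q^S(h₁, γ*), υ₂ = Q^S(h₂, γ*). Suppose there exist γ', γ'' ∈ Γ and B ≥ 0 such that: Q^S(h, γ') = Q^S(h, γ*) for all h ≠ h₂, Q^S(h₂, γ') ≥ Q^S(h₁, γ') − B and Q^S(h₁, γ') = υ₁; symmetrically Q^S(h, γ'') = Q^S(h, γ*) for all h ≠ h₁, Q^S(h₁, γ'') ≥ Q^S(h₂, γ'') − B and Q^S(h₂, γ'') = υ₂. Then |υ₁ − υ₂| ≤ B. -/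
theorem le_of_sum_mul_le_of_eq_of_ne {ι R : Type*} [Fintype ι] [CommRing R] [LinearOrder R]
    [IsStrictOrderedRing R] {w f g : ι → R} {i : ι} (hw : 0 < w i)
    (hfg : ∀ j, j ≠ i → f j = g j) (hle : ∑ j, w j * f j ≤ ∑ j, w j * g j) :
    f i ≤ g i := by
  have hdiff : ∑ j, w j * f j - ∑ j, w j * g j = w i * (f i - g i) := by
    rw [← Finset.sum_sub_distrib, Fintype.sum_eq_single i fun j hj => by rw [hfg j hj, sub_self]]
    ring
  have : w i * (f i - g i) ≤ 0 := hdiff ▸ sub_nonpos.mpr hle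
  exact sub_nonpos.mp (nonpos_of_mul_nonpos_right this hw)

theorem stmt_9_general {H Γ : Type*} [Fintype H]
    (P : H → ℝ)
    (QS : H → Γ → ℝ) (Q : Γ → ℝ)
    (hQ : ∀ γ, Q γ = ∑ h, P h * QS h γ)
    (h₁ h₂ : H) (hP₁pos : 0 < P h₁) (hP₂pos : 0 < P h₂)
    (γstar : Γ) (hopt : ∀ γ, Q γ ≤ Q γstar)
    (υ₁ υ₂ : ℝ) (hυ₁ : υ₁ = QS h₁ γstar) (hυ₂ : υ₂ = QS h₂ γstar)
    (B : ℝ)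
    (γ' γ'' : Γ)
    (hγ'eq : ∀ h, h ≠ h₂ → QS h γ' = QS h γstar)
    (hγ'ge : QS h₂ γ' ≥ QS h₁ γ' - B)
    (hγ'h₁ : QS h₁ γ' = υ₁)
    (hγ''eq : ∀ h, h ≠ h₁ → QS h γ'' = QS h γstar)
    (hγ''ge : QS h₁ γ'' ≥ QS h₂ γ'' - B)
    (hγ''h₂ : QS h₂ γ'' = υ₂) :
    |υ₁ - υ₂| ≤ B := by
  have exchange : ∀ γ h₀, 0 < P h₀ → (∀ h, h ≠ h₀ → QS h γ = QS h γstar) →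
      QS h₀ γ ≤ QS h₀ γstar := fun γ h₀ hpos hagree =>
    le_of_sum_mul_le_of_eq_of_ne hpos hagree (by simpa only [hQ] using hopt γ)
  have h₂_le := exchange γ' h₂ hP₂pos hγ'eq
  have h₁_le := exchange γ'' h₁ hP₁pos hγ''eq
  rw [abs_sub_le_iff]
  constructor <;> linarith

theorem stmt_9 {H Γ : Type*} [Fintype H] [Fintype Γ] [DecidableEq H]
    (P : H → ℝ) (hPnn : ∀ h, 0 ≤ P h) (hP1 : ∑ h, P h = 1)
    (QS : H → Γ → ℝ) (Q : Γ → ℝ)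
    (hQ : ∀ γ, Q γ = ∑ h, P h * QS h γ)
    (h₁ h₂ : H) (hP₁pos : 0 < P h₁) (hP₂pos : 0 < P h₂)
    (γstar : Γ) (hopt : ∀ γ, Q γ ≤ Q γstar)
    (υ₁ υ₂ : ℝ) (hυ₁ : υ₁ = QS h₁ γstar) (hυ₂ : υ₂ = QS h₂ γstar)
    (B : ℝ) (hB : 0 ≤ B)
    (γ' γ'' : Γ)
    (hγ'eq : ∀ h, h ≠ h₂ → QS h γ' = QS h γstar)
    (hγ'ge : QS h₂ γ' ≥ QS h₁ γ' - B)
    (hγ'h₁ : QS h₁ γ' = υ₁)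
    (hγ''eq : ∀ h, h ≠ h₁ → QS h γ'' = QS h γstar)
    (hγ''ge : QS h₁ γ'' ≥ QS h₂ γ'' - B)
    (hγ''h₂ : QS h₂ γ'' = υ₂) :
    |υ₁ - υ₂| ≤ B :=
  stmt_9_general P QS Q hQ h₁ h₂ hP₁pos hP₂pos γstar hopt υ₁ υ₂ hυ₁ hυ₂ B γ' γ'' hγ'eq hγ'ge hγ'h₁
    hγ''eq hγ''ge hγ''h₂
end

section
/- Let S be a finite set, H₁, H₂, Z finite sets, with joint distributions such that: (a) for all h⁰, h^n, z^{-n}: P(z^{-n} | h^0, h^n) = P(z^{-n} | h^0, z^n) where z^n = ϑ(h^0, h^n) [consistency (SPI4)]; and (b) for all full histories: E[R(S, a) | h^0, h^{1:N}] = E[R(S, a) | h^0, z^{1:N}] where z^{1:N} is the compression of h^{1:N} [(SPS2) with zero error]. Then for every agent n and every h^0, h^n, a: E[R(S, a) | h^0, h^n] = E[R(S, a) | h^0, z^n], i.e., condition (SPI2) holds. -/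
/-!
Let `c z` be the expected reward given `(h⁰, zⁿ, z⁻ⁿ = z)`. By (SPS2) it is also the expected
reward given `(h⁰, hⁿ, h⁻ⁿ)` for any `h⁻ⁿ` compressing to `z`, so by the tower property the
expected reward given `(h⁰, hⁿ)` is `∑ z, c z · P(z⁻ⁿ = z | h⁰, hⁿ)`, and likewise the expected
reward given `(h⁰, zⁿ)` is `∑ z, c z · P(z⁻ⁿ = z | h⁰, zⁿ)`. (SPI4) says these two conditional
laws of `z⁻ⁿ` coincide.
-/

/-- Conditional expectation of `f` given the event `A` in a finite probability
space with weight function `p`. -/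
noncomputable def cexp {Ω : Type*} [Fintype Ω] (p : Ω → ℝ)
    (A : Ω → Prop) [DecidablePred A] (f : Ω → ℝ) : ℝ :=
  (∑ ω ∈ Finset.univ.filter (fun ω => A ω), p ω * f ω) /
    (∑ ω ∈ Finset.univ.filter (fun ω => A ω), p ω)

open Finset

section Cexp

variable {Ω : Type*} [Fintype Ω] (p : Ω → ℝ)

lemma cexp_congr {A B : Ω → Prop} [DecidablePred A] [DecidablePred B] (h : ∀ ω, A ω ↔ B ω)
    (f : Ω → ℝ) : cexp p A f = cexp p B f := by
  unfold cexp
  rw [filter_congr fun ω _ => h ω]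

/-- When `A` is null, `cexp p A f` is the junk value `0`, but then every summand on the left
vanishes. -/
lemma sum_mul_eq_cexp_mul_sum (hp : ∀ ω, 0 ≤ p ω) (A : Ω → Prop) [DecidablePred A]
    (f : Ω → ℝ) :
    ∑ ω ∈ univ.filter A, p ω * f ω = cexp p A f * ∑ ω ∈ univ.filter A, p ω := by
  by_cases h : ∑ ω ∈ univ.filter A, p ω = 0
  · have hzero : ∀ ω ∈ univ.filter A, p ω = 0 :=
      (sum_eq_zero_iff_of_nonneg fun ω _ => hp ω).1 h
    rw [h, mul_zero]
    exact sum_eq_zero fun ω hω => by rw [hzero ω hω, zero_mul]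
  · rw [cexp, div_mul_cancel₀ _ h]

/-- Tower property. -/
lemma cexp_eq_of_cexp_fiber_eq (hp : ∀ ω, 0 ≤ p ω) {β : Type*} [DecidableEq β]
    (A : Ω → Prop) [DecidablePred A] (X : Ω → β) (f g : Ω → ℝ)
    (hfg : ∀ ω, A ω → cexp p (fun ω' => A ω' ∧ X ω' = X ω) f = g ω) :
    cexp p A f = cexp p A g := by
  suffices h : ∑ ω ∈ univ.filter A, p ω * f ω = ∑ ω ∈ univ.filter A, p ω * g ω by
    rw [cexp, cexp, h]
  have hmaps : ∀ ω ∈ univ.filter A, X ω ∈ univ.image X :=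
    fun ω _ => mem_image_of_mem X (mem_univ ω)
  rw [← sum_fiberwise_of_maps_to hmaps, ← sum_fiberwise_of_maps_to hmaps]
  refine sum_congr rfl fun x _ => ?_
  have hfiber : (univ.filter A).filter (fun ω => X ω = x)
      = univ.filter (fun ω => A ω ∧ X ω = x) :=
    filter_filter _ _ _
  rw [hfiber, sum_mul_eq_cexp_mul_sum p hp, mul_sum]
  refine sum_congr rfl fun ω hω => ?_
  obtain ⟨hA, rfl⟩ := (mem_filter.1 hω).2
  rw [hfg ω hA, mul_comm]

lemma cexp_comp_eq_sum_mul_cexp_indicator {β : Type*} [DecidableEq β] (A : Ω → Prop)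
    [DecidablePred A] (X : Ω → β) (c : β → ℝ) :
    cexp p A (fun ω => c (X ω))
      = ∑ x ∈ univ.image X, c x * cexp p A (fun ω => if X ω = x then 1 else 0) := by
  have hmaps : ∀ ω ∈ univ.filter A, X ω ∈ univ.image X :=
    fun ω _ => mem_image_of_mem X (mem_univ ω)
  simp only [cexp, mul_ite, mul_one, mul_zero, ← sum_filter, mul_div_assoc', mul_sum]
  rw [← sum_div, ← sum_fiberwise_of_maps_to hmaps]
  congr 1
  refine sum_congr rfl fun x _ => sum_congr rfl fun ω hω => ?_
  rw [(mem_filter.1 hω).2, mul_comm]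

end Cexp

theorem stmt_15_general {Ω S A H0T HnT HmT ZnT ZmT : Type*}
    [Fintype Ω]
    [DecidableEq H0T] [DecidableEq HnT] [DecidableEq HmT]
    [DecidableEq ZnT] [DecidableEq ZmT]
    (p : Ω → ℝ) (hpnn : ∀ ω, 0 ≤ p ω)
    (Sv : Ω → S) (H0v : Ω → H0T) (Hnv : Ω → HnT) (Hmv : Ω → HmT)
    (ϑn : H0T → HnT → ZnT) (ϑm : H0T → HmT → ZmT)
    (Znv : Ω → ZnT)
    (Zmv : Ω → ZmT) (hZm : ∀ ω, Zmv ω = ϑm (H0v ω) (Hmv ω))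
    (R : S → A → ℝ) (a : A)
    -- (SPI4): the conditional law of the other agents' compressed states
    -- given (h⁰, hⁿ) depends on hⁿ only through its compression zⁿ
    (hSPI4 : ∀ (h0 : H0T) (hn : HnT) (zm : ZmT),
      cexp p (fun ω => H0v ω = h0 ∧ Hnv ω = hn)
          (fun ω => if Zmv ω = zm then 1 else 0)
        = cexp p (fun ω => H0v ω = h0 ∧ Znv ω = ϑn h0 hn)
          (fun ω => if Zmv ω = zm then 1 else 0))
    -- (SPS2) with zero error: the expected reward given the full histories
    -- equals that given the compressed private states
    (hSPS2 : ∀ (h0 : H0T) (hn : HnT) (hm : HmT),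
      cexp p (fun ω => H0v ω = h0 ∧ Hnv ω = hn ∧ Hmv ω = hm)
          (fun ω => R (Sv ω) a)
        = cexp p (fun ω => H0v ω = h0 ∧ Znv ω = ϑn h0 hn ∧ Zmv ω = ϑm h0 hm)
          (fun ω => R (Sv ω) a)) :
    -- (SPI2): the expected reward given (h⁰, hⁿ) equals that given (h⁰, zⁿ)
    ∀ (h0 : H0T) (hn : HnT),
      cexp p (fun ω => H0v ω = h0 ∧ Hnv ω = hn) (fun ω => R (Sv ω) a)
        = cexp p (fun ω => H0v ω = h0 ∧ Znv ω = ϑn h0 hn)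
          (fun ω => R (Sv ω) a) := by
  intro h0 hn
  set c : ZmT → ℝ := fun zm =>
    cexp p (fun ω => H0v ω = h0 ∧ Znv ω = ϑn h0 hn ∧ Zmv ω = zm) (fun ω => R (Sv ω) a)
  have hfull : cexp p (fun ω => H0v ω = h0 ∧ Hnv ω = hn) (fun ω => R (Sv ω) a)
      = cexp p (fun ω => H0v ω = h0 ∧ Hnv ω = hn) (fun ω => c (Zmv ω)) := by
    refine cexp_eq_of_cexp_fiber_eq p hpnn _ Hmv _ _ fun ω ⟨hω0, _⟩ => ?_
    rw [cexp_congr p (fun _ => and_assoc), hSPS2, hZm, hω0]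
  have hcompressed : cexp p (fun ω => H0v ω = h0 ∧ Znv ω = ϑn h0 hn) (fun ω => R (Sv ω) a)
      = cexp p (fun ω => H0v ω = h0 ∧ Znv ω = ϑn h0 hn) (fun ω => c (Zmv ω)) :=
    cexp_eq_of_cexp_fiber_eq p hpnn _ Zmv _ _ fun _ _ => cexp_congr p (fun _ => and_assoc) _
  rw [hfull, hcompressed, cexp_comp_eq_sum_mul_cexp_indicator,
    cexp_comp_eq_sum_mul_cexp_indicator]
  simp only [hSPI4 h0 hn]

/-- (SPS2) with zero error and the consistency condition (SPI4) imply (SPI2). -/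
theorem stmt_15 {Ω S A H0T HnT HmT ZnT ZmT : Type*}
    [Fintype Ω] [Fintype S] [Fintype A]
    [DecidableEq H0T] [DecidableEq HnT] [DecidableEq HmT]
    [DecidableEq ZnT] [DecidableEq ZmT]
    (p : Ω → ℝ) (hpnn : ∀ ω, 0 ≤ p ω) (hp1 : ∑ ω, p ω = 1)
    (Sv : Ω → S) (H0v : Ω → H0T) (Hnv : Ω → HnT) (Hmv : Ω → HmT)
    (ϑn : H0T → HnT → ZnT) (ϑm : H0T → HmT → ZmT)
    (Znv : Ω → ZnT) (hZn : ∀ ω, Znv ω = ϑn (H0v ω) (Hnv ω))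
    (Zmv : Ω → ZmT) (hZm : ∀ ω, Zmv ω = ϑm (H0v ω) (Hmv ω))
    (R : S → A → ℝ) (a : A)
    -- (SPI4): the conditional law of the other agents' compressed states
    -- given (h⁰, hⁿ) depends on hⁿ only through its compression zⁿ
    (hSPI4 : ∀ (h0 : H0T) (hn : HnT) (zm : ZmT),
      cexp p (fun ω => H0v ω = h0 ∧ Hnv ω = hn)
          (fun ω => if Zmv ω = zm then 1 else 0)
        = cexp p (fun ω => H0v ω = h0 ∧ Znv ω = ϑn h0 hn)
          (fun ω => if Zmv ω = zm then 1 else 0))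
    -- (SPS2) with zero error: the expected reward given the full histories
    -- equals that given the compressed private states
    (hSPS2 : ∀ (h0 : H0T) (hn : HnT) (hm : HmT),
      cexp p (fun ω => H0v ω = h0 ∧ Hnv ω = hn ∧ Hmv ω = hm)
          (fun ω => R (Sv ω) a)
        = cexp p (fun ω => H0v ω = h0 ∧ Znv ω = ϑn h0 hn ∧ Zmv ω = ϑm h0 hm)
          (fun ω => R (Sv ω) a)) :
    -- (SPI2): the expected reward given (h⁰, hⁿ) equals that given (h⁰, zⁿ)
    ∀ (h0 : H0T) (hn : HnT),
      cexp p (fun ω => H0v ω = h0 ∧ Hnv ω = hn) (fun ω => R (Sv ω) a)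
        = cexp p (fun ω => H0v ω = h0 ∧ Znv ω = ϑn h0 hn)
          (fun ω => R (Sv ω) a) :=
  stmt_15_general p hpnn Sv H0v Hnv Hmv ϑn ϑm Znv Zmv hZm R a hSPI4 hSPS2
end
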